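/- arXiv:math/0601372 — 10 statements merged into one kernel-verified Lean document; each statement's English description precedes it below -/
import Mathlib

section
/- Let K be a field and let p, r, q be natural numbers. For A : (words over {0,...,p-1} × words over {0,...,r-1} of equal length) → K and B : (words over {0,...,r-1} × words over {0,...,q-1} of equal length) → K, define the matrix product AB by (AB)[U,W] = Σ_{V ∈ {0,...,r-1}^l} A[U,V]·B[V,W] for words U,W of length l. Define the recursive closure of such a function X as the linear span of all shifts ρ(S,T)X, where (ρ(S,T)X)[U,W] = X[US, WT]. Then dim(recursive closure of AB) ≤ dim(recursive closure of A) · dim(recursive closure of B). -/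
/-- Functions on the monoid `M_{p×q}` of pairs of equal-length words over
alphabets of sizes `p` and `q`, with values in `K`. -/
abbrev RM (K : Type) [Field K] (p q : ℕ) : Type :=
  (n : ℕ) → (Fin n → Fin p) → (Fin n → Fin q) → K

/-- The shift `ρ(S,T)` acting on `K^{M_{p×q}}`: `(ρ(S,T)A)[U,W] = A[US,WT]`. -/
def shiftRM {K : Type} [Field K] {p q m : ℕ} (S : Fin m → Fin p) (T : Fin m → Fin q)
    (A : RM K p q) : RM K p q :=
  fun n U W => A (n + m) (Fin.append U S) (Fin.append W T)

/-- The recursive closure of `A`: the span of all shifts of `A`. -/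
def recClosure {K : Type} [Field K] {p q : ℕ} (A : RM K p q) : Submodule K (RM K p q) :=
  Submodule.span K {B | ∃ (m : ℕ) (S : Fin m → Fin p) (T : Fin m → Fin q), B = shiftRM S T A}

/-- The matrix product: `(AB)[U,W] = ∑_V A[U,V] B[V,W]`. -/
def matmulRM {K : Type} [Field K] {p r q : ℕ} (A : RM K p r) (B : RM K r q) : RM K p q :=
  fun n U W => ∑ V : Fin n → Fin r, A n U V * B n V W

/-- Splitting a function on `Fin (n+m)` into two pieces. -/
def appendFunEquiv (n m r : ℕ) : ((Fin n → Fin r) × (Fin m → Fin r)) ≃ (Fin (n + m) → Fin r) where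
  toFun P := Fin.append P.1 P.2
  invFun V := (fun i => V (Fin.castAdd m i), fun i => V (Fin.natAdd n i))
  left_inv P := by
    ext i <;> simp [Fin.append_left, Fin.append_right]
  right_inv V := by
    funext i
    refine Fin.addCases (fun i => ?_) (fun i => ?_) i <;>
      simp [Fin.append_left, Fin.append_right]

/-- The key identity: a shift of a product is a sum of products of shifts. -/
theorem shiftRM_matmulRM {K : Type} [Field K] {p r q m : ℕ}
    (S : Fin m → Fin p) (T : Fin m → Fin q) (A : RM K p r) (B : RM K r q) :
    shiftRM S T (matmulRM A B) =
      ∑ V2 : Fin m → Fin r, matmulRM (shiftRM S V2 A) (shiftRM V2 T B) := by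
  funext n U W
  have : (∑ V2 : Fin m → Fin r, matmulRM (shiftRM S V2 A) (shiftRM V2 T B)) n U W
      = ∑ V2 : Fin m → Fin r, ∑ V1 : Fin n → Fin r,
          A (n + m) (Fin.append U S) (Fin.append V1 V2) *
          B (n + m) (Fin.append V1 V2) (Fin.append W T) := by
    simp [matmulRM, shiftRM]
  rw [this]
  rw [Finset.sum_comm]
  rw [show (shiftRM S T (matmulRM A B)) n U W
      = ∑ V : Fin (n + m) → Fin r, A (n + m) (Fin.append U S) V *
          B (n + m) V (Fin.append W T) from rfl]
  rw [← Equiv.sum_comp (appendFunEquiv n m r)]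
  rw [Fintype.sum_prod_type]
  rfl

/-- `matmulRM` as a bilinear map. -/
def matmulLin (K : Type) [Field K] (p r q : ℕ) :
    RM K p r →ₗ[K] RM K r q →ₗ[K] RM K p q :=
  LinearMap.mk₂ K matmulRM
    (fun A A' B => by
      funext n U W
      simp [matmulRM, add_mul, Finset.sum_add_distrib])
    (fun c A B => by
      funext n U W
      simp [matmulRM, Finset.mul_sum, mul_assoc])
    (fun A B B' => by
      funext n U W
      simp [matmulRM, mul_add, Finset.sum_add_distrib])
    (fun c A B => by
      funext n U W
      simp [matmulRM, Finset.mul_sum]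
      congr 1; funext V; ring)

/-- Over a field, the rank of the image of a pair of submodules under a
bilinear map is bounded by the product of their ranks. -/
theorem rank_map₂_le {K M N P : Type} [Field K]
    [AddCommGroup M] [Module K M] [AddCommGroup N] [Module K N]
    [AddCommGroup P] [Module K P]
    (f : M →ₗ[K] N →ₗ[K] P) (p : Submodule K M) (q : Submodule K N) :
    Module.rank K ↥(Submodule.map₂ f p q) ≤ Module.rank K ↥p * Module.rank K ↥q := by
  let b := Module.Basis.ofVectorSpace K ↥p
  let c := Module.Basis.ofVectorSpace K ↥q
  have hp : Submodule.span K (⇑p.subtype '' Set.range ⇑b) = p := by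
    rw [← Submodule.map_span, b.span_eq, Submodule.map_top, Submodule.range_subtype]
  have hq : Submodule.span K (⇑q.subtype '' Set.range ⇑c) = q := by
    rw [← Submodule.map_span, c.span_eq, Submodule.map_top, Submodule.range_subtype]
  calc Module.rank K ↥(Submodule.map₂ f p q)
      = Module.rank K ↥(Submodule.span K
          (Set.image2 (fun m n => f m n) (⇑p.subtype '' Set.range ⇑b)
            (⇑q.subtype '' Set.range ⇑c))) := by
        rw [← Submodule.map₂_span_span, hp, hq]
    _ ≤ Cardinal.mk ↥(Set.image2 (fun m n => f m n) (⇑p.subtype '' Set.range ⇑b)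
            (⇑q.subtype '' Set.range ⇑c)) := rank_span_le _
    _ ≤ Cardinal.mk ↥(⇑p.subtype '' Set.range ⇑b) * Cardinal.mk ↥(⇑q.subtype '' Set.range ⇑c) :=
        Cardinal.mk_image2_le
    _ ≤ Module.rank K ↥p * Module.rank K ↥q := by
        apply mul_le_mul'
        · exact (Cardinal.mk_image_le.trans Cardinal.mk_range_le).trans_eq b.mk_eq_rank''
        · exact (Cardinal.mk_image_le.trans Cardinal.mk_range_le).trans_eq c.mk_eq_rank''

/-- dim(recursive closure of AB) ≤ dim(recursive closure of A) · dim(recursive closure of B). -/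
theorem rank_recClosure_matmul_le (K : Type) [Field K] (p r q : ℕ)
    (A : RM K p r) (B : RM K r q) :
    Module.rank K ↥(recClosure (matmulRM A B)) ≤
      Module.rank K ↥(recClosure A) * Module.rank K ↥(recClosure B) := by
  have hle : recClosure (matmulRM A B) ≤
      Submodule.map₂ (matmulLin K p r q) (recClosure A) (recClosure B) := by
    rw [recClosure, Submodule.span_le]
    rintro X ⟨m, S, T, rfl⟩
    rw [shiftRM_matmulRM]
    apply Submodule.sum_mem
    intro V2 _
    exact Submodule.apply_mem_map₂ _ (Submodule.subset_span ⟨m, S, V2, rfl⟩)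
      (Submodule.subset_span ⟨m, V2, T, rfl⟩)
  exact (Submodule.rank_mono hle).trans (rank_map₂_le _ _ _)
end

section
/- Let K be a field and let 𝒜 ⊆ K^{M_{p×q}} be a subspace that is recursively closed (i.e. closed under all shift maps ρ(S,T)). Suppose there exists a natural number N such that the restriction map from 𝒜 to functions on words of length at most N+1 has the same image dimension as the restriction map to words of length at most N (i.e. the projection 𝒜[M^{≤N+1}] → 𝒜[M^{≤N}] is an isomorphism). Then the restriction map A ↦ A[M^{≤N}] is injective on 𝒜; in particular 𝒜 is isomorphic to its image 𝒜[M^{≤N}] and is finite-dimensional. -/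
private lemma append_decomp {α : Type*} {n : ℕ} (U : Fin (n + 1) → α) :
    Fin.append (fun i : Fin n => U (Fin.castAdd 1 i)) (fun _ : Fin 1 => U (Fin.last n)) = U := by
  funext j
  refine Fin.addCases (fun i => ?_) (fun i => ?_) j
  · rw [Fin.append_left]
  · rw [Fin.append_right]
    congr 1
    ext
    simp [Fin.last]

/-- Saturation: if on a recursively closed subspace the restriction to words of length
at most N determines the restriction to words of length at most N+1, then the
restriction to words of length at most N is injective on the subspace, which is
therefore finite-dimensional (isomorphic to its image of restrictions). -/
theorem saturation_injective_of_recursively_closed (K : Type) [Field K] (p q N : ℕ)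
    (𝒜 : Submodule K (RM K p q))
    (hclosed : ∀ (m : ℕ) (S : Fin m → Fin p) (T : Fin m → Fin q),
      ∀ A ∈ 𝒜, shiftRM S T A ∈ 𝒜)
    (hsat : ∀ A ∈ 𝒜, ∀ B ∈ 𝒜,
      (∀ n, n ≤ N → ∀ (U : Fin n → Fin p) (W : Fin n → Fin q), A n U W = B n U W) →
      (∀ n, n ≤ N + 1 → ∀ (U : Fin n → Fin p) (W : Fin n → Fin q), A n U W = B n U W)) :
    (∀ A ∈ 𝒜, ∀ B ∈ 𝒜,
      (∀ n, n ≤ N → ∀ (U : Fin n → Fin p) (W : Fin n → Fin q), A n U W = B n U W) → A = B)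
    ∧ FiniteDimensional K ↥𝒜 := by
  -- main induction: agreement up to N implies agreement up to N + k for all k
  have key : ∀ k : ℕ, ∀ A ∈ 𝒜, ∀ B ∈ 𝒜,
      (∀ n, n ≤ N → ∀ (U : Fin n → Fin p) (W : Fin n → Fin q), A n U W = B n U W) →
      (∀ n, n ≤ N + k → ∀ (U : Fin n → Fin p) (W : Fin n → Fin q), A n U W = B n U W) := by
    intro k
    induction k with
    | zero => intro A hA B hB h; exact h
    | succ k ih =>
      intro A hA B hB h n hn U W
      by_cases hn1 : n ≤ N + 1
      · exact hsat A hA B hB h n hn1 U W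
      · cases n with
        | zero => omega
        | succ n' =>
          have hA' := hclosed 1 (fun _ : Fin 1 => U (Fin.last n'))
            (fun _ : Fin 1 => W (Fin.last n')) A hA
          have hB' := hclosed 1 (fun _ : Fin 1 => U (Fin.last n'))
            (fun _ : Fin 1 => W (Fin.last n')) B hB
          have hagree : ∀ m, m ≤ N → ∀ (u : Fin m → Fin p) (w : Fin m → Fin q),
              shiftRM (fun _ : Fin 1 => U (Fin.last n')) (fun _ : Fin 1 => W (Fin.last n'))
                  A m u w =
                shiftRM (fun _ : Fin 1 => U (Fin.last n')) (fun _ : Fin 1 => W (Fin.last n'))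
                  B m u w := by
            intro m hm u w
            exact hsat A hA B hB h (m + 1) (by omega) _ _
          have := ih _ hA' _ hB' hagree n' (by omega)
            (fun i => U (Fin.castAdd 1 i)) (fun i => W (Fin.castAdd 1 i))
          simpa only [shiftRM, append_decomp] using this
  constructor
  · intro A hA B hB h
    funext n U W
    exact key n A hA B hB h n (by omega) U W
  · -- restriction map to lengths ≤ N is injective, codomain is finite dimensional
    let φ : ↥𝒜 →ₗ[K] ((n : Fin (N + 1)) → (Fin n → Fin p) → (Fin n → Fin q) → K) :=
      { toFun := fun A n U W => (A : RM K p q) n U W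
        map_add' := fun A B => rfl
        map_smul' := fun c A => rfl }
    have hinj : Function.Injective φ := by
      intro A B hAB
      ext1
      funext n U W
      rcases le_or_gt n N with hle | hlt
      · have := congrFun hAB ⟨n, by omega⟩
        exact congrFun (congrFun this U) W
      · obtain ⟨k, hk⟩ : ∃ k, n = N + k := ⟨n - N, by omega⟩
        subst hk
        refine key k _ A.2 _ B.2 ?_ _ le_rfl U W
        intro m hm u w
        have := congrFun hAB ⟨m, by omega⟩
        exact congrFun (congrFun this u) w
    exact FiniteDimensional.of_injective φ hinj
end

section
/- Let K be a field and A, B ∈ K^{M_{p×q}}. Define the pointwise (Hadamard) product (A∘B)[U,W] = A[U,W]·B[U,W]. If the recursive closure of A is spanned by A_1,...,A_d and the recursive closure of B is spanned by B_1,...,B_e, then the recursive closure of A∘B is contained in the span of the d·e elements A_i∘B_j. In particular, if A and B are recurrence matrices then so is A∘B, with complexity at most the product of the complexities. -/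
/-- The Hadamard (pointwise) product. -/
def hadRM {K : Type} [Field K] {p q : ℕ} (A B : RM K p q) : RM K p q :=
  fun n U W => A n U W * B n U W


lemma hadRM_add_left {K : Type} [Field K] {p q : ℕ} (x y z : RM K p q) :
    hadRM (x + y) z = hadRM x z + hadRM y z := by
  funext n U W; simp [hadRM, add_mul]

lemma hadRM_add_right {K : Type} [Field K] {p q : ℕ} (x y z : RM K p q) :
    hadRM x (y + z) = hadRM x y + hadRM x z := by
  funext n U W; simp [hadRM, mul_add]

lemma hadRM_smul_left {K : Type} [Field K] {p q : ℕ} (a : K) (x z : RM K p q) :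
    hadRM (a • x) z = a • hadRM x z := by
  funext n U W; simp [hadRM, mul_assoc]

lemma hadRM_smul_right {K : Type} [Field K] {p q : ℕ} (a : K) (x z : RM K p q) :
    hadRM x (a • z) = a • hadRM x z := by
  funext n U W; simp [hadRM, smul_eq_mul]; ring

lemma hadRM_zero_left {K : Type} [Field K] {p q : ℕ} (z : RM K p q) :
    hadRM 0 z = 0 := by funext n U W; simp [hadRM]

lemma hadRM_zero_right {K : Type} [Field K] {p q : ℕ} (z : RM K p q) :
    hadRM z 0 = 0 := by funext n U W; simp [hadRM]

lemma had_mem_span {K : Type} [Field K] {p q d e : ℕ}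
    (Af : Fin d → RM K p q) (Bf : Fin e → RM K p q) {x y : RM K p q}
    (hx : x ∈ Submodule.span K (Set.range Af)) (hy : y ∈ Submodule.span K (Set.range Bf)) :
    hadRM x y ∈
      Submodule.span K (Set.range fun ij : Fin d × Fin e => hadRM (Af ij.1) (Bf ij.2)) := by
  induction hx using Submodule.span_induction with
  | mem x hx =>
    induction hy using Submodule.span_induction with
    | mem y hy =>
      obtain ⟨i, rfl⟩ := hx
      obtain ⟨j, rfl⟩ := hy
      exact Submodule.subset_span ⟨(i, j), rfl⟩
    | zero => rw [hadRM_zero_right]; exact Submodule.zero_mem _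
    | add y z _ _ hy hz => rw [hadRM_add_right]; exact Submodule.add_mem _ hy hz
    | smul a y _ hy => rw [hadRM_smul_right]; exact Submodule.smul_mem _ a hy
  | zero => rw [hadRM_zero_left]; exact Submodule.zero_mem _
  | add x z _ _ h1 h2 => rw [hadRM_add_left]; exact Submodule.add_mem _ h1 h2
  | smul a x _ h1 => rw [hadRM_smul_left]; exact Submodule.smul_mem _ a h1

lemma recClosure_had_le {K : Type} [Field K] {p q d e : ℕ}
    (A B : RM K p q) (Af : Fin d → RM K p q) (Bf : Fin e → RM K p q)
    (hA : recClosure A ≤ Submodule.span K (Set.range Af))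
    (hB : recClosure B ≤ Submodule.span K (Set.range Bf)) :
    recClosure (hadRM A B) ≤
      Submodule.span K (Set.range fun ij : Fin d × Fin e => hadRM (Af ij.1) (Bf ij.2)) := by
  rw [recClosure, Submodule.span_le]
  rintro _ ⟨m, S, T, rfl⟩
  have hs : shiftRM S T (hadRM A B) = hadRM (shiftRM S T A) (shiftRM S T B) := rfl
  rw [hs]
  exact had_mem_span Af Bf (hA (Submodule.subset_span ⟨m, S, T, rfl⟩))
    (hB (Submodule.subset_span ⟨m, S, T, rfl⟩))

/-- If the recursive closure of A is spanned by A_1,...,A_d and that of B by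
B_1,...,B_e, then the recursive closure of A∘B is contained in the span of the
products A_i∘B_j; in particular its dimension is at most d·e, and the Hadamard
product of recurrence matrices is a recurrence matrix. -/
theorem recClosure_hadamard_le (K : Type) [Field K] (p q d e : ℕ)
    (A B : RM K p q) (Af : Fin d → RM K p q) (Bf : Fin e → RM K p q)
    (hA : recClosure A = Submodule.span K (Set.range Af))
    (hB : recClosure B = Submodule.span K (Set.range Bf)) :
    recClosure (hadRM A B) ≤
      Submodule.span K (Set.range fun ij : Fin d × Fin e => hadRM (Af ij.1) (Bf ij.2))
    ∧ Module.rank K ↥(recClosure (hadRM A B)) ≤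
        Module.rank K ↥(recClosure A) * Module.rank K ↥(recClosure B)
    ∧ (FiniteDimensional K ↥(recClosure A) → FiniteDimensional K ↥(recClosure B) →
        FiniteDimensional K ↥(recClosure (hadRM A B))) := by
  have h1 := recClosure_had_le A B Af Bf hA.le hB.le
  refine ⟨h1, ?_, fun _ _ => ?_⟩
  · -- rank bound via bases
    have hAfin : FiniteDimensional K ↥(recClosure A) := by
      rw [hA]; exact FiniteDimensional.span_of_finite K (Set.finite_range Af)
    have hBfin : FiniteDimensional K ↥(recClosure B) := by
      rw [hB]; exact FiniteDimensional.span_of_finite K (Set.finite_range Bf)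
    set dA := Module.finrank K ↥(recClosure A)
    set dB := Module.finrank K ↥(recClosure B)
    have bA := Module.finBasis K ↥(recClosure A)
    have bB := Module.finBasis K ↥(recClosure B)
    have hspanA : recClosure A ≤ Submodule.span K (Set.range fun i => ((bA i : RM K p q))) := by
      have : Set.range (fun i => ((bA i : RM K p q))) = Subtype.val '' Set.range bA :=
        Set.range_comp _ _
      rw [this, ← Submodule.coe_subtype, Submodule.span_image, bA.span_eq, Submodule.map_subtype_top]
    have hspanB : recClosure B ≤ Submodule.span K (Set.range fun i => ((bB i : RM K p q))) := by
      have : Set.range (fun i => ((bB i : RM K p q))) = Subtype.val '' Set.range bB :=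
        Set.range_comp _ _
      rw [this, ← Submodule.coe_subtype, Submodule.span_image, bB.span_eq, Submodule.map_subtype_top]
    have h2 := recClosure_had_le A B _ _ hspanA hspanB
    calc Module.rank K ↥(recClosure (hadRM A B))
        ≤ Module.rank K ↥(Submodule.span K (Set.range fun ij : Fin dA × Fin dB =>
            hadRM ((bA ij.1 : RM K p q)) ((bB ij.2 : RM K p q)))) := Submodule.rank_mono h2
      _ ≤ Cardinal.mk (Fin dA × Fin dB) :=
          (rank_span_le _).trans Cardinal.mk_range_le
      _ = (dA : Cardinal) * dB := by simp
      _ = Module.rank K ↥(recClosure A) * Module.rank K ↥(recClosure B) := by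
          rw [Module.finrank_eq_rank, Module.finrank_eq_rank]
  · have : FiniteDimensional K ↥(Submodule.span K
        (Set.range fun ij : Fin d × Fin e => hadRM (Af ij.1) (Bf ij.2))) :=
      FiniteDimensional.span_of_finite K (Set.finite_range _)
    exact Submodule.finiteDimensional_of_le h1
end

section
/- Let K be a field and A, B ∈ K^{M_{p×q}}. Define the convolution product (A*B)[U,W] = Σ A[U₁,W₁]·B[U₂,W₂], the sum running over all l+1 factorizations (U,W) = (U₁,W₁)(U₂,W₂) of a pair of words of length l (concatenation in both coordinates). Then for every letter pair (s,t) with 0 ≤ s < p, 0 ≤ t < q, one has the identity ρ(s,t)(A*B) = A*(ρ(s,t)B) + B[∅,∅]·ρ(s,t)A, where (ρ(s,t)X)[U,W] = X[Us,Wt]. Consequently, if A and B are recurrence matrices then so is A*B. -/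
/-- Functions on the monoid `M_{p×q}`, here realized as the free monoid of lists of
letter-pairs (a pair of equal-length words is the same as a word of pairs of letters). -/
abbrev RML (K : Type) [Field K] (p q : ℕ) : Type :=
  List (Fin p × Fin q) → K

/-- The shift `ρ(S,T)` acting by `(ρ(S,T)A)[U,W] = A[US,WT]`. -/
def shiftL {K : Type} [Field K] {p q : ℕ} (s : List (Fin p × Fin q)) (A : RML K p q) :
    RML K p q :=
  fun w => A (w ++ s)

/-- The recursive closure of `A`: the span of all shifts of `A`. -/
def recClosureL {K : Type} [Field K] {p q : ℕ} (A : RML K p q) : Submodule K (RML K p q) :=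
  Submodule.span K {B | ∃ s : List (Fin p × Fin q), B = shiftL s A}

/-- The convolution product: `(A*B)[U,W] = Σ A[U₁,W₁]·B[U₂,W₂]` over the `l+1`
factorizations `(U,W) = (U₁,W₁)(U₂,W₂)` of a word of length `l`. -/
def convL {K : Type} [Field K] {p q : ℕ} (A B : RML K p q) : RML K p q :=
  fun w => ∑ k ∈ Finset.range (w.length + 1), A (w.take k) * B (w.drop k)

variable {K : Type} [Field K] {p q : ℕ}

lemma shiftL_nil (A : RML K p q) : shiftL [] A = A := by
  funext w; simp [shiftL]

lemma shiftL_shiftL (s t : List (Fin p × Fin q)) (A : RML K p q) :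
    shiftL s (shiftL t A) = shiftL (s ++ t) A := by
  funext w; simp [shiftL, List.append_assoc]

lemma shiftL_add (s : List (Fin p × Fin q)) (A B : RML K p q) :
    shiftL s (A + B) = shiftL s A + shiftL s B := rfl

lemma shiftL_smul (s : List (Fin p × Fin q)) (c : K) (A : RML K p q) :
    shiftL s (c • A) = c • shiftL s A := rfl

def convR (A : RML K p q) : RML K p q →ₗ[K] RML K p q where
  toFun B := convL A B
  map_add' B C := by
    funext w; simp [convL, mul_add, Finset.sum_add_distrib]
  map_smul' c B := by
    funext w; simp [convL, Finset.mul_sum, mul_left_comm]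

lemma shift_conv_id (A B : RML K p q) (s : Fin p) (t : Fin q) :
    shiftL [(s, t)] (convL A B)
      = convL A (shiftL [(s, t)] B) + B [] • shiftL [(s, t)] A := by
  funext w
  simp only [Pi.add_apply, Pi.smul_apply, shiftL, convL, smul_eq_mul, List.length_append,
    List.length_cons, List.length_nil]
  rw [Finset.sum_range_succ]
  congr 1
  · apply Finset.sum_congr rfl
    intro k hk
    have hk' : k ≤ w.length := Nat.lt_succ_iff.mp (Finset.mem_range.mp hk)
    rw [List.take_append_of_le_length hk', List.drop_append_of_le_length hk']
  · rw [show w.length + 1 = (w ++ [(s,t)]).length by simp, List.take_length, List.drop_length]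
    exact mul_comm _ _

lemma shift_mem_recClosure (A : RML K p q) (s : List (Fin p × Fin q)) :
    shiftL s A ∈ recClosureL A :=
  Submodule.subset_span ⟨s, rfl⟩

lemma key (A B : RML K p q) (s : List (Fin p × Fin q)) :
    ∀ u, shiftL s (convL A (shiftL u B)) ∈
      (recClosureL B).map (convR A) ⊔ recClosureL A := by
  induction s using List.reverseRecOn with
  | nil =>
    intro u
    rw [shiftL_nil]
    exact Submodule.mem_sup_left ⟨shiftL u B, shift_mem_recClosure B u, rfl⟩
  | append_singleton s c ih =>
    intro u
    have h1 : shiftL (s ++ [c]) (convL A (shiftL u B))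
        = shiftL s (shiftL [c] (convL A (shiftL u B))) := (shiftL_shiftL s [c] _).symm
    rw [h1, show ((c : Fin p × Fin q)) = (c.1, c.2) from rfl,
      shift_conv_id A (shiftL u B) c.1 c.2, shiftL_add, shiftL_smul,
      shiftL_shiftL s [(c.1, c.2)] A, shiftL_shiftL [(c.1, c.2)] u B]
    refine Submodule.add_mem _ ?_ (Submodule.smul_mem _ _ ?_)
    · exact ih _
    · exact Submodule.mem_sup_right (shift_mem_recClosure A _)


/-- `ρ(s,t)(A*B) = A*(ρ(s,t)B) + B[∅,∅]·ρ(s,t)A`, and consequently the convolution of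
two recurrence matrices is a recurrence matrix. -/
theorem shift_conv (K : Type) [Field K] (p q : ℕ) (A B : RML K p q) :
    (∀ (s : Fin p) (t : Fin q),
      shiftL [(s, t)] (convL A B)
        = convL A (shiftL [(s, t)] B) + B [] • shiftL [(s, t)] A)
    ∧ (FiniteDimensional K ↥(recClosureL A) → FiniteDimensional K ↥(recClosureL B) →
        FiniteDimensional K ↥(recClosureL (convL A B))) := by
  refine ⟨shift_conv_id A B, fun hA hB => ?_⟩
  have hM : FiniteDimensional K ↥((recClosureL B).map (convR A) ⊔ recClosureL A) := by
    have : FiniteDimensional K ↥((recClosureL B).map (convR A)) :=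
      Module.Finite.map _ _
    exact Submodule.finiteDimensional_sup _ _
  have hle : recClosureL (convL A B) ≤ (recClosureL B).map (convR A) ⊔ recClosureL A := by
    refine Submodule.span_le.mpr ?_
    rintro X ⟨s, rfl⟩
    have := key A B s []
    rwa [shiftL_nil] at this
  exact Submodule.finiteDimensional_of_le hle
end

section
/- Let K be a field and let A ∈ K^{M_{p×q}} be a recurrence matrix. Then the set of values {A[U,W] : (U,W) ∈ M_{p×q}} is finite if and only if the set of shifts {ρ(S,T)A : (S,T) ∈ M_{p×q}} (as a subset of K^{M_{p×q}}) is finite. -/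
lemma RM_cast {K : Type} [Field K] {p q : ℕ} (A : RM K p q) {m n : ℕ} (h : m = n)
    (U : Fin n → Fin p) (W : Fin n → Fin q) :
    A m (U ∘ Fin.cast h) (W ∘ Fin.cast h) = A n U W := by
  subst h
  rfl

lemma shift_nil {K : Type} [Field K] {p q : ℕ} (A : RM K p q) {n : ℕ}
    (U : Fin n → Fin p) (W : Fin n → Fin q) :
    shiftRM U W A 0 Fin.elim0 Fin.elim0 = A n U W := by
  show A (0 + n) (Fin.append Fin.elim0 U) (Fin.append Fin.elim0 W) = A n U W
  rw [Fin.elim0_append, Fin.elim0_append]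
  have h : (0 : ℕ) + n = n := Nat.zero_add n
  have : Fin.cast (Nat.zero_add n) = Fin.cast h := rfl
  calc A (0 + n) (U ∘ Fin.cast (Nat.zero_add n)) (W ∘ Fin.cast (Nat.zero_add n))
      = A (0 + n) (U ∘ Fin.cast h) (W ∘ Fin.cast h) := rfl
    _ = A n U W := RM_cast A h U W

/-- For a recurrence matrix, the set of its values is finite iff the set of its
shifts is finite. -/
theorem values_finite_iff_shifts_finite (K : Type) [Field K] (p q : ℕ) (A : RM K p q)
    (hA : FiniteDimensional K ↥(recClosure A)) :
    Set.Finite {x : K | ∃ (n : ℕ) (U : Fin n → Fin p) (W : Fin n → Fin q), A n U W = x} ↔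
    Set.Finite {B : RM K p q |
      ∃ (m : ℕ) (S : Fin m → Fin p) (T : Fin m → Fin q), B = shiftRM S T A} := by
  haveI := hA
  set F : Set K := {x : K | ∃ (n : ℕ) (U : Fin n → Fin p) (W : Fin n → Fin q), A n U W = x}
    with hF
  set Sh : Set (RM K p q) := {B : RM K p q |
      ∃ (m : ℕ) (S : Fin m → Fin p) (T : Fin m → Fin q), B = shiftRM S T A} with hSh
  constructor
  · intro hval
    -- index type for evaluation points
    set V := recClosure A with hV
    let f : (Σ n : ℕ, (Fin n → Fin p) × (Fin n → Fin q)) → (↥V →ₗ[K] K) := fun i =>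
      { toFun := fun B => (B : RM K p q) i.1 i.2.1 i.2.2
        map_add' := fun B C => rfl
        map_smul' := fun c B => rfl }
    let N : Finset (Σ n : ℕ, (Fin n → Fin p) × (Fin n → Fin q)) → Submodule K ↥V :=
      fun s => ⨅ i ∈ s, LinearMap.ker (f i)
    have hmem : ∀ s v, v ∈ N s ↔ ∀ i ∈ s, f i v = 0 := by
      intro s v
      simp [N, Submodule.mem_iInf, LinearMap.mem_ker]
    have hNanti : ∀ s t, s ⊆ t → N t ≤ N s := by
      intro s t hst v hv
      rw [hmem] at hv ⊢
      exact fun i hi => hv i (hst hi)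
    haveI : IsArtinian K ↥V := isArtinian_of_fg_of_artinian'
    obtain ⟨M', ⟨s₀, rfl⟩, hmin⟩ :=
      IsArtinian.set_has_minimal (Set.range N) ⟨N ∅, ⟨∅, rfl⟩⟩
    have key : ∀ i, N s₀ ≤ LinearMap.ker (f i) := by
      intro i
      have h1 : N (insert i s₀) ≤ N s₀ := hNanti _ _ (Finset.subset_insert _ _)
      have h2 : ¬ N (insert i s₀) < N s₀ := hmin _ ⟨_, rfl⟩
      have heq : N (insert i s₀) = N s₀ := by
        rcases h1.lt_or_eq with h | h
        · exact absurd h h2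
        · exact h
      intro v hv
      rw [← heq] at hv
      rw [hmem] at hv
      exact hv i (Finset.mem_insert_self _ _)
    have hbot : N s₀ = ⊥ := by
      rw [eq_bot_iff]
      intro v hv
      have hz : ∀ i : (Σ n : ℕ, (Fin n → Fin p) × (Fin n → Fin q)), (v : RM K p q) i.1 i.2.1 i.2.2 = 0 := fun i => key i hv
      have : (v : RM K p q) = 0 := by
        funext n U W
        exact hz ⟨n, U, W⟩
      simpa [Submodule.mem_bot] using Subtype.ext this
    -- the restriction map to points in s₀
    let g : RM K p q → (↥s₀ → K) := fun B i => B i.1.1 i.1.2.1 i.1.2.2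
    have hsub : ∀ B ∈ Sh, B ∈ V := by
      intro B hB
      exact Submodule.subset_span hB
    have hinj : Set.InjOn g Sh := by
      intro B hB C hC hBC
      have hBV := hsub B hB
      have hCV := hsub C hC
      have hd : (⟨B, hBV⟩ - ⟨C, hCV⟩ : ↥V) ∈ N s₀ := by
        rw [hmem]
        intro i hi
        have : g B ⟨i, hi⟩ = g C ⟨i, hi⟩ := by rw [hBC]
        simpa [f, sub_eq_zero] using this
      rw [hbot, Submodule.mem_bot, sub_eq_zero] at hd
      exact congrArg Subtype.val hd
    have himg : g '' Sh ⊆ Set.pi Set.univ (fun _ : ↥s₀ => F) := by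
      rintro _ ⟨B, hB, rfl⟩ i _
      obtain ⟨m, S, T, rfl⟩ := hB
      exact ⟨_, _, _, rfl⟩
    have hpi : (Set.pi Set.univ (fun _ : ↥s₀ => F)).Finite :=
      Set.Finite.pi (fun _ => hval)
    exact Set.Finite.of_finite_image (hpi.subset himg) hinj
  · intro hsh
    have : F ⊆ (fun B : RM K p q => B 0 Fin.elim0 Fin.elim0) '' Sh := by
      rintro x ⟨n, U, W, rfl⟩
      exact ⟨shiftRM U W A, ⟨n, U, W, rfl⟩, shift_nil A U W⟩
    exact (hsh.image _).subset this
end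

section
/- For n ≥ 1, let A(n) be the 2n×2n matrix over ℚ with entries A_{i,j} = 1 if |i−j| = 1 and 0 otherwise, and let B(n) be the 2n×2n matrix with entries B_{i,j} = 0 if min(i,j) is odd, and B_{i,j} equal to the coefficient of x^{|i−j|} in the power series x/(1+x²) otherwise (that is, B_{i,j} = 0 if |i−j| is even, and B_{i,j} = (−1)^{(|i−j|−1)/2} if |i−j| is odd and min(i,j) is even). Then A(n)·B(n) = Id. -/
/-- The 2n×2n matrix with entries 1 at distance 1 and 0 elsewhere. -/
def pathA (n : ℕ) : Matrix (Fin (2 * n)) (Fin (2 * n)) ℚ :=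
  Matrix.of fun i j => if Nat.dist (i : ℕ) (j : ℕ) = 1 then 1 else 0

/-- The claimed inverse: 0 if min(i,j) is odd or |i−j| even, otherwise
(−1)^((|i−j|−1)/2), the coefficient of x^|i−j| in x/(1+x²). -/
def pathB (n : ℕ) : Matrix (Fin (2 * n)) (Fin (2 * n)) ℚ :=
  Matrix.of fun i j =>
    if min (i : ℕ) (j : ℕ) % 2 = 1 then 0
    else if Nat.dist (i : ℕ) (j : ℕ) % 2 = 0 then 0
    else (-1) ^ ((Nat.dist (i : ℕ) (j : ℕ) - 1) / 2)

/-- The entries of `pathB` as a function on ℕ. -/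
def bF (j k : ℕ) : ℚ :=
  if min j k % 2 = 1 then 0
  else if Nat.dist j k % 2 = 0 then 0
  else (-1) ^ ((Nat.dist j k - 1) / 2)

lemma neg_one_pow_add_neg_one_pow_succ (e : ℕ) : ((-1 : ℚ)) ^ e + (-1) ^ (e + 1) = 0 := by
  rw [pow_succ]; ring

lemma bF_one (K : ℕ) : bF 1 K = if 0 = K then 1 else 0 := by
  unfold bF
  by_cases hK : K = 0
  · subst hK; norm_num [Nat.dist]
  · have h1 : min 1 K % 2 = 1 := by omega
    simp [h1, hK, Ne.symm hK]

lemma bF_top (I K : ℕ) (hI : I % 2 = 1) (hK : K ≤ I) : bF (I + 1) K = 0 := by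
  unfold bF
  by_cases h : K % 2 = 1
  · have h1 : min (I + 1) K % 2 = 1 := by omega
    simp [h1]
  · have h1 : ¬ (min (I + 1) K % 2 = 1) := by omega
    have h2 : Nat.dist (I + 1) K % 2 = 0 := by simp [Nat.dist]; omega
    simp [h1, h2]

lemma bF_key (I K : ℕ) (hI : 1 ≤ I) :
    bF (I + 1) K + bF (I - 1) K = if I = K then 1 else 0 := by
  unfold bF
  by_cases hpar : I % 2 = K % 2
  · by_cases hIK : I = K
    · subst hIK
      have d1 : Nat.dist (I + 1) I = 1 := by simp [Nat.dist]
      have d2 : Nat.dist (I - 1) I = 1 := by simp [Nat.dist]; omega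
      have m1 : min (I + 1) I = I := min_eq_right (by omega)
      have m2 : min (I - 1) I = I - 1 := min_eq_left (by omega)
      rcases Nat.mod_two_eq_zero_or_one I with hI2 | hI2
      · have h1 : ¬ (min (I + 1) I % 2 = 1) := by rw [m1]; omega
        have h2 : min (I - 1) I % 2 = 1 := by rw [m2]; omega
        have hA : (I - 1) % 2 = 1 := by omega
        simp [h1, h2, d1, hI2, hA]
      · have h1 : min (I + 1) I % 2 = 1 := by rw [m1]; omega
        have h2 : ¬ (min (I - 1) I % 2 = 1) := by rw [m2]; omega
        have hA : ¬ ((I - 1) % 2 = 1) := by omega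
        simp [h1, h2, d2, hI2, hA]
    · rcases lt_or_gt_of_ne hIK with hlt | hgt
      · -- I < K, so K ≥ I + 2
        have hK2 : I + 2 ≤ K := by omega
        have m1 : min (I + 1) K = I + 1 := min_eq_left (by omega)
        have m2 : min (I - 1) K = I - 1 := min_eq_left (by omega)
        rcases Nat.mod_two_eq_zero_or_one I with hI2 | hI2
        · have h1 : min (I + 1) K % 2 = 1 := by rw [m1]; omega
          have h2 : min (I - 1) K % 2 = 1 := by rw [m2]; omega
          simp [h1, h2, hIK]
        · have h1 : ¬ (min (I + 1) K % 2 = 1) := by rw [m1]; omega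
          have h2 : ¬ (min (I - 1) K % 2 = 1) := by rw [m2]; omega
          have d1 : Nat.dist (I + 1) K = K - I - 1 := by simp [Nat.dist]; omega
          have d2 : Nat.dist (I - 1) K = K - I + 1 := by simp [Nat.dist]; omega
          have hd1 : ¬ ((K - I - 1) % 2 = 0) := by omega
          have hd2 : ¬ ((K - I + 1) % 2 = 0) := by omega
          have he : (K - I + 1 - 1) / 2 = (K - I - 1 - 1) / 2 + 1 := by omega
          simp only [d1, d2, h1, h2, if_false, hd1, hd2, if_neg hIK, he]
          exact neg_one_pow_add_neg_one_pow_succ _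
      · -- K < I, so K ≤ I - 2
        have hK2 : K + 2 ≤ I := by omega
        have m1 : min (I + 1) K = K := min_eq_right (by omega)
        have m2 : min (I - 1) K = K := min_eq_right (by omega)
        rcases Nat.mod_two_eq_zero_or_one K with hK3 | hK3
        · have h1 : ¬ (min (I + 1) K % 2 = 1) := by rw [m1]; omega
          have h2 : ¬ (min (I - 1) K % 2 = 1) := by rw [m2]; omega
          have d1 : Nat.dist (I + 1) K = I - K + 1 := by simp [Nat.dist]; omega
          have d2 : Nat.dist (I - 1) K = I - K - 1 := by simp [Nat.dist]; omega
          have hd1 : ¬ ((I - K + 1) % 2 = 0) := by omega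
          have hd2 : ¬ ((I - K - 1) % 2 = 0) := by omega
          have he : (I - K + 1 - 1) / 2 = (I - K - 1 - 1) / 2 + 1 := by omega
          simp only [d1, d2, h1, h2, if_false, hd1, hd2, if_neg hIK, he]
          rw [add_comm]
          exact neg_one_pow_add_neg_one_pow_succ _
        · have h1 : min (I + 1) K % 2 = 1 := by rw [m1]; omega
          have h2 : min (I - 1) K % 2 = 1 := by rw [m2]; omega
          simp [h1, h2, hIK]
  · -- opposite parities: both distances are even
    have hIK : I ≠ K := by omega
    have d1 : Nat.dist (I + 1) K % 2 = 0 := by simp [Nat.dist]; omega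
    have d2 : Nat.dist (I - 1) K % 2 = 0 := by simp [Nat.dist]; omega
    by_cases h1 : min (I + 1) K % 2 = 1 <;> by_cases h2 : min (I - 1) K % 2 = 1 <;>
      simp [h1, h2, d1, d2, hIK]

lemma key_sum (n I K : ℕ) (hn : 1 ≤ n) (hI : I < 2 * n) (hK : K < 2 * n) :
    ∑ t ∈ Finset.range (2 * n), (if Nat.dist I t = 1 then (1 : ℚ) else 0) * bF t K
      = if I = K then 1 else 0 := by
  rcases Nat.eq_zero_or_pos I with hI0 | hIpos
  · subst hI0
    have hs : ∀ t ∈ Finset.range (2 * n),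
        (if Nat.dist 0 t = 1 then (1 : ℚ) else 0) * bF t K
          = if t = 1 then bF t K else 0 := by
      intro t _
      have : Nat.dist 0 t = 1 ↔ t = 1 := by simp [Nat.dist]
      by_cases ht : t = 1
      · subst ht; simp [Nat.dist]
      · simp [ht, this]
    rw [Finset.sum_congr rfl hs, Finset.sum_ite_eq' (Finset.range (2 * n)) 1 (fun t => bF t K)]
    have h1 : (1 : ℕ) ∈ Finset.range (2 * n) := by simp; omega
    rw [if_pos h1, bF_one]
  · have hs : ∀ t ∈ Finset.range (2 * n),
        (if Nat.dist I t = 1 then (1 : ℚ) else 0) * bF t K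
          = (if t = I + 1 then bF (I + 1) K else 0)
            + (if t = I - 1 then bF (I - 1) K else 0) := by
      intro t _
      have hd : Nat.dist I t = 1 ↔ (t = I + 1 ∨ t = I - 1) := by simp [Nat.dist]; omega
      by_cases h1 : t = I + 1
      · subst h1
        have : ¬ (I + 1 = I - 1) := by omega
        simp [hd, this]
      · by_cases h2 : t = I - 1
        · subst h2; simp [hd, h1]
        · have : ¬ Nat.dist I t = 1 := by rw [hd]; tauto
          simp [this, h1, h2]
    rw [Finset.sum_congr rfl hs, Finset.sum_add_distrib,
      Finset.sum_ite_eq' (Finset.range (2 * n)) (I + 1) (fun _ => bF (I + 1) K),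
      Finset.sum_ite_eq' (Finset.range (2 * n)) (I - 1) (fun _ => bF (I - 1) K)]
    have hm : (I - 1) ∈ Finset.range (2 * n) := by simp; omega
    rw [if_pos hm]
    by_cases hp : (I + 1) ∈ Finset.range (2 * n)
    · rw [if_pos hp]; exact bF_key I K hIpos
    · rw [if_neg hp]
      have hIe : I = 2 * n - 1 := by simp at hp; omega
      have hodd : I % 2 = 1 := by omega
      have hKI : K ≤ I := by omega
      have h0 : bF (I + 1) K = 0 := bF_top I K hodd hKI
      have := bF_key I K hIpos
      rw [h0, zero_add] at this
      rw [this, zero_add]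

theorem pathA_mul_pathB (n : ℕ) (hn : 1 ≤ n) : pathA n * pathB n = 1 := by
  ext i k
  rw [Matrix.mul_apply]
  have hentry : ∀ j : Fin (2 * n),
      pathA n i j * pathB n j k
        = (if Nat.dist (i : ℕ) (j : ℕ) = 1 then (1 : ℚ) else 0) * bF (j : ℕ) (k : ℕ) := by
    intro j; rfl
  simp only [hentry]
  rw [Fin.sum_univ_eq_sum_range (fun t => (if Nat.dist (i : ℕ) t = 1 then (1 : ℚ) else 0) * bF t (k : ℕ))]
  rw [key_sum n i k hn i.isLt k.isLt]
  simp [Matrix.one_apply, Fin.ext_iff]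
end

section
/- For n ≥ 1, let A(n) be the n×n Toeplitz matrix with entries A_{i,j} = 4 if i = j, A_{i,j} = 3 if i < j, and A_{i,j} = 3 + 3(i−j) if i > j (0 ≤ i,j < n). Then det(A(n)) = 1 if n ≡ 0 (mod 3), det(A(n)) = 4 if n ≡ 1 (mod 3), and det(A(n)) = −2 if n ≡ 2 (mod 3). In particular A(n) is unimodular over ℤ whenever 3 divides n. -/
/-- The integer Toeplitz matrix with 4 on the diagonal, 3 above, and 3+3(i−j) below. -/
def toep433 (n : ℕ) : Matrix (Fin n) (Fin n) ℤ :=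
  Matrix.of fun i j =>
    if (i : ℕ) = (j : ℕ) then 4
    else if (i : ℕ) < (j : ℕ) then 3
    else 3 + 3 * (((i : ℕ) - (j : ℕ) : ℕ) : ℤ)


/-- periodic weight sequence 1, -2, 1 -/
def uu (l : ℕ) : ℚ := if l % 3 = 0 then 1 else if l % 3 = 1 then -2 else 1

lemma uu_L1 (N : ℕ) : (Finset.range N).sum (fun l => uu l)
    = (if N % 3 = 0 then 0 else if N % 3 = 1 then 1 else -1) := by
  induction N with
  | zero => simp
  | succ N ih =>
    rw [Finset.sum_range_succ, ih]
    have h3 : N % 3 = 0 ∨ N % 3 = 1 ∨ N % 3 = 2 := by omega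
    rcases h3 with h | h | h <;>
      · have h' : (N+1) % 3 = (N % 3 + 1) % 3 := by omega
        simp [uu, h, h']
        try norm_num

lemma uu_H (K : ℚ) (N : ℕ) : (Finset.range N).sum (fun l => (K - 3*l) * uu l)
    = (if N % 3 = 0 then 0 else if N % 3 = 1 then K - 3*((N:ℚ)-1) else -K + 3*N) := by
  induction N with
  | zero => simp
  | succ N ih =>
    rw [Finset.sum_range_succ, ih]
    have h3 : N % 3 = 0 ∨ N % 3 = 1 ∨ N % 3 = 2 := by omega
    rcases h3 with h | h | h <;>
      · have h' : (N+1) % 3 = (N % 3 + 1) % 3 := by omega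
        simp [uu, h, h']
        try (push_cast; ring)


/-- the Toeplitz entry pattern, over ℚ, as a function of natural indices -/
def qa (i j : ℕ) : ℚ := if i = j then 4 else if i < j then 3 else 3 + 3 * ((i - j : ℕ) : ℚ)

/-- the rational version of the matrix -/
def Bq (n : ℕ) : Matrix (Fin n) (Fin n) ℚ := Matrix.of fun i j => qa (i : ℕ) (j : ℕ)

lemma Bq_eq_map (n : ℕ) : Bq n = (toep433 n).map (fun z => (z : ℚ)) := by
  ext i j
  simp only [Bq, toep433, Matrix.map_apply, Matrix.of_apply, qa]
  split_ifs <;> push_cast <;> ring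

def kk (n : ℕ) : ℚ := if n % 3 = 0 then 3 else if n % 3 = 1 then 3/4 else -3/2

def sval (n a : ℕ) : ℚ :=
  kk n * (if n % 3 = 0 then 0 else if n % 3 = 1 then (3+3*(n:ℚ)+3*(a:ℚ)) - 3*((n:ℚ)-1)
          else -(3+3*(n:ℚ)+3*(a:ℚ)) + 3*(n:ℚ))

lemma sum_lower (n i : ℕ) (hi : n ≤ i) :
    (Finset.range n).sum (fun l => qa i l * (kk n * uu l)) = sval n (i - n) := by
  have hcong : ∀ l ∈ Finset.range n,
      qa i l * (kk n * uu l) = kk n * (((3+3*(i:ℚ)) - 3*l) * uu l) := by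
    intro l hl
    have hl' : l < n := Finset.mem_range.mp hl
    have hlt : l < i := lt_of_lt_of_le hl' hi
    have : qa i l = 3 + 3*((i:ℚ) - l) := by
      unfold qa
      rw [if_neg (by omega), if_neg (by omega), Nat.cast_sub hlt.le]
    rw [this]; ring
  rw [Finset.sum_congr rfl hcong, ← Finset.mul_sum, uu_H]
  have hc : ((i - n : ℕ) : ℚ) = (i : ℚ) - n := by
    rw [Nat.cast_sub hi]
  unfold sval
  have h3 : n % 3 = 0 ∨ n % 3 = 1 ∨ n % 3 = 2 := by omega
  rcases h3 with h | h | h <;>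
    · simp only [h, hc, kk]
      norm_num
      try ring

lemma sum_upper (n i : ℕ) (hi : i < n) :
    (Finset.range n).sum (fun l => qa i l * (kk n * uu l)) = 3 := by
  have hcong : ∀ l ∈ Finset.range n,
      qa i l * (kk n * uu l) = (3*kk n) * uu l + (if l = i then kk n * uu l else 0)
        + (if l < i then kk n * (((3*(i:ℚ)) - 3*l) * uu l) else 0) := by
    intro l hl
    rcases lt_trichotomy l i with h | h | h
    · have : qa i l = 3 + 3*((i:ℚ) - l) := by
        unfold qa
        rw [if_neg (by omega), if_neg (by omega), Nat.cast_sub h.le]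
      rw [this, if_neg (by omega), if_pos h]; ring
    · subst h
      have : qa l l = 4 := by unfold qa; rw [if_pos rfl]
      rw [this, if_pos rfl, if_neg (by omega)]; ring
    · have : qa i l = 3 := by unfold qa; rw [if_neg (by omega), if_pos h]
      rw [this, if_neg (by omega), if_neg (by omega)]; ring
  rw [Finset.sum_congr rfl hcong, Finset.sum_add_distrib, Finset.sum_add_distrib,
    ← Finset.mul_sum, uu_L1, Finset.sum_ite_eq' (Finset.range n) i,
    if_pos (Finset.mem_range.mpr hi)]
  have hsub : (Finset.range n).sum (fun l => if l < i then kk n * (((3*(i:ℚ)) - 3*l) * uu l) else 0)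
      = (Finset.range i).sum (fun l => kk n * (((3*(i:ℚ)) - 3*l) * uu l)) := by
    rw [← Finset.sum_subset (Finset.range_subset_range.mpr hi.le)
      (fun x _ hx => if_neg (by simpa using hx))]
    exact Finset.sum_congr rfl (fun l hl => if_pos (Finset.mem_range.mp hl))
  rw [hsub, ← Finset.mul_sum, uu_H]
  have h3 : n % 3 = 0 ∨ n % 3 = 1 ∨ n % 3 = 2 := by omega
  have h3i : i % 3 = 0 ∨ i % 3 = 1 ∨ i % 3 = 2 := by omega
  rcases h3 with h | h | h <;> rcases h3i with hI | hI | hI <;>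
    simp [h, hI, uu, kk] <;> ring

def Qmat (n : ℕ) : Matrix (Fin (n+3)) (Fin (n+3)) ℚ :=
  Matrix.of fun i j =>
    (if i = j then 1 else 0) - (if (i:ℕ) < n ∧ n ≤ (j:ℕ) then kk n * uu (i:ℕ) else 0)

def Cmat (n : ℕ) : Matrix (Fin (n+3)) (Fin (n+3)) ℚ :=
  Matrix.of fun i j =>
    if (j:ℕ) < n then qa (i:ℕ) (j:ℕ)
    else if (i:ℕ) < n then 0
    else qa (i:ℕ) (j:ℕ) - sval n ((i:ℕ) - n)

lemma Qmat_det (n : ℕ) : (Qmat n).det = 1 := by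
  have h : (Qmat n).BlockTriangular id := by
    intro i j hij
    simp only [Qmat, Matrix.of_apply, id] at hij ⊢
    rw [if_neg (by exact fun h => absurd h (ne_of_gt hij)), if_neg (by
      rintro ⟨h1, h2⟩
      have : (j:ℕ) < (i:ℕ) := hij
      omega)]
    ring
  rw [Matrix.det_of_upperTriangular h]
  apply Finset.prod_eq_one
  intro i _
  simp only [Qmat, Matrix.of_apply]
  rw [if_pos trivial, if_neg (fun h => by omega)]
  ring

lemma mul_eq (n : ℕ) : Bq (n+3) * Qmat n = Cmat n := by
  ext i j
  rw [Matrix.mul_apply]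
  have expand : ∀ l, Bq (n+3) i l * Qmat n l j
      = (if l = j then qa (i:ℕ) (j:ℕ) else 0)
        - (if n ≤ (j:ℕ) then (if (l:ℕ) < n then qa (i:ℕ) (l:ℕ) * (kk n * uu (l:ℕ)) else 0) else 0) := by
    intro l
    simp only [Bq, Qmat, Matrix.of_apply]
    rcases eq_or_ne l j with rfl | hl
    · by_cases h2 : (l:ℕ) < n ∧ n ≤ (l:ℕ)
      · omega
      · rcases Classical.em (n ≤ (l:ℕ)) with h | h
        · rw [if_pos rfl, if_neg h2, if_pos rfl, if_pos h, if_neg (by omega)]; ring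
        · rw [if_pos rfl, if_neg h2, if_pos rfl, if_neg h]; ring
    · rw [if_neg hl, if_neg hl]
      by_cases h2 : (l:ℕ) < n ∧ n ≤ (j:ℕ)
      · rw [if_pos h2, if_pos h2.2, if_pos h2.1]; ring
      · rcases Classical.em (n ≤ (j:ℕ)) with h | h
        · rw [if_neg h2, if_pos h, if_neg (by tauto)]; ring
        · rw [if_neg h2, if_neg h]; ring
  rw [Finset.sum_congr rfl (fun l _ => expand l), Finset.sum_sub_distrib,
    Finset.sum_ite_eq' Finset.univ j, if_pos (Finset.mem_univ j)]
  by_cases hj : n ≤ (j:ℕ)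
  · simp only [if_pos hj]
    have hconv : (Finset.univ.sum fun l : Fin (n+3) =>
        (if (l:ℕ) < n then qa (i:ℕ) (l:ℕ) * (kk n * uu (l:ℕ)) else 0))
        = (Finset.range n).sum (fun l => qa (i:ℕ) l * (kk n * uu l)) := by
      rw [Fin.sum_univ_eq_sum_range (fun l => if l < n then qa (i:ℕ) l * (kk n * uu l) else 0)]
      rw [← Finset.sum_subset (Finset.range_subset_range.mpr (by omega : n ≤ n + 3))
        (fun x _ hx => if_neg (by simpa using hx))]
      exact Finset.sum_congr rfl (fun l hl => if_pos (Finset.mem_range.mp hl))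
    rw [hconv]
    by_cases hi : (i:ℕ) < n
    · rw [sum_upper n i hi]
      simp only [Cmat, Matrix.of_apply, if_neg (by omega : ¬ (j:ℕ) < n), if_pos hi]
      have : qa (i:ℕ) (j:ℕ) = 3 := by
        unfold qa; rw [if_neg (by omega), if_pos (by omega)]
      rw [this]; ring
    · rw [sum_lower n i (by omega)]
      simp only [Cmat, Matrix.of_apply, if_neg (by omega : ¬ (j:ℕ) < n), if_neg hi]
  · simp only [if_neg hj]
    simp only [Cmat, Matrix.of_apply, if_pos (by omega : (j:ℕ) < n)]
    simp

def Zmat (n : ℕ) : Matrix (Fin 3) (Fin 3) ℚ :=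
  Matrix.of fun a b => qa (n+(a:ℕ)) (n+(b:ℕ)) - sval n (a:ℕ)

def Ymat (n : ℕ) : Matrix (Fin 3) (Fin n) ℚ :=
  Matrix.of fun a b => qa (n+(a:ℕ)) (b:ℕ)

lemma Cmat_blocks (n : ℕ) : (Cmat n).submatrix finSumFinEquiv finSumFinEquiv
    = Matrix.fromBlocks (Bq n) 0 (Ymat n) (Zmat n) := by
  ext i j
  rcases i with a | a <;> rcases j with b | b <;>
    simp only [Matrix.submatrix_apply, finSumFinEquiv_apply_left, finSumFinEquiv_apply_right,
      Matrix.fromBlocks_apply₁₁, Matrix.fromBlocks_apply₁₂, Matrix.fromBlocks_apply₂₁,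
      Matrix.fromBlocks_apply₂₂, Cmat, Bq, Ymat, Zmat, Matrix.of_apply,
      Fin.coe_castAdd, Fin.coe_natAdd, Matrix.zero_apply]
  · rw [if_pos b.isLt]
  · rw [if_neg (by omega), if_pos a.isLt]
  · rw [if_pos b.isLt]
  · rw [if_neg (by omega), if_neg (by omega), Nat.add_sub_cancel_left]

lemma Cmat_det (n : ℕ) : (Cmat n).det = (Bq n).det * (Zmat n).det := by
  rw [← Matrix.det_submatrix_equiv_self finSumFinEquiv (Cmat n), Cmat_blocks,
    Matrix.det_fromBlocks_zero₁₂]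

lemma Zmat_det (n : ℕ) : (Zmat n).det = 1 := by
  rw [Matrix.det_fin_three]
  have h3 : n % 3 = 0 ∨ n % 3 = 1 ∨ n % 3 = 2 := by omega
  rcases h3 with h | h | h <;>
    · simp only [Zmat, qa, sval, kk, h, Matrix.of_apply, Fin.val_zero, Fin.val_one, Fin.val_two,
        Nat.add_zero]
      norm_num [Nat.add_sub_add_left, Nat.add_sub_cancel_left, Nat.add_sub_cancel]
      try ring

lemma Bq_key (n : ℕ) : (Bq (n+3)).det = (Bq n).det := by
  have h := congrArg Matrix.det (mul_eq n)
  rw [Matrix.det_mul, Qmat_det, mul_one] at h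
  rw [h, Cmat_det, Zmat_det, mul_one]

lemma Bq_det : ∀ n : ℕ, (Bq n).det = if n % 3 = 0 then 1 else if n % 3 = 1 then 4 else -2
  | 0 => by simp [Matrix.det_fin_zero]
  | 1 => by
      rw [Matrix.det_fin_one]
      norm_num [Bq, qa]
  | 2 => by
      rw [Matrix.det_fin_two]
      norm_num [Bq, qa]
  | (m+3) => by
      rw [Bq_key m, Bq_det m]
      have h : (m+3) % 3 = m % 3 := by omega
      rw [h]

theorem det_toep433 (n : ℕ) :
    (n % 3 = 0 → (toep433 n).det = 1) ∧
    (n % 3 = 1 → (toep433 n).det = 4) ∧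
    (n % 3 = 2 → (toep433 n).det = -2) := by
  have hcast : ((toep433 n).det : ℚ) = (Bq n).det := by
    rw [Bq_eq_map]
    exact (RingHom.map_det (Int.castRingHom ℚ) (toep433 n)).symm ▸ rfl
  rw [Bq_det n] at hcast
  refine ⟨fun h => ?_, fun h => ?_, fun h => ?_⟩ <;>
    · rw [h] at hcast
      norm_num at hcast
      exact_mod_cast hcast
end

section
/- Fix an integer p ≥ 2 and a natural number N ≥ 1. The determinant of the N×N Hankel matrix with polynomial entries H_{i,j} = x^{p^{i+j+1}} (for 0 ≤ i,j < N) in ℤ[x] is a monic polynomial in x of degree Σ_{k=0}^{N−1} p^{2k+1}; in particular this determinant is a nonzero polynomial. -/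
/-- The Hankel matrix with polynomial entries x^(p^(i+j+1)). -/
noncomputable def hankelPow (p N : ℕ) : Matrix (Fin N) (Fin N) (Polynomial ℤ) :=
  Matrix.of fun i j => Polynomial.X ^ (p ^ ((i : ℕ) + (j : ℕ) + 1))

/-- A strictly monotone permutation of `Fin N` is the identity. -/
lemma perm_strictMono_eq_one {N : ℕ} (σ : Equiv.Perm (Fin N))
    (hs : StrictMono σ) : σ = 1 := by
  have hinv : StrictMono (σ⁻¹ : Equiv.Perm (Fin N)) := by
    intro a b hab
    by_contra h
    push_neg at h
    have := hs.monotone h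
    simp only [Equiv.Perm.coe_inv, Equiv.apply_symm_apply] at this
    exact absurd (lt_of_lt_of_le hab this) (lt_irrefl _)
  haveI : WellFoundedLT (Fin N) := inferInstance
  ext i
  have h1 : i ≤ σ i := hs.le_apply
  have h2 : σ i ≤ i := by
    have := hinv.le_apply (x := σ i)
    simpa using this
  exact le_antisymm h2 h1

/-- Exponent sum attached to a permutation. -/
lemma exp_sum_lt {p N : ℕ} (hp : 2 ≤ p) (σ : Equiv.Perm (Fin N)) (hσ : σ ≠ 1) :
    (∑ i : Fin N, p ^ ((σ i : ℕ) + (i : ℕ) + 1)) <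
      ∑ i : Fin N, p ^ ((i : ℕ) + (i : ℕ) + 1) := by
  have hp1 : (1 : ℤ) < (p : ℤ) := by exact_mod_cast lt_of_lt_of_le one_lt_two hp
  set f : Fin N → ℤ := fun i => (p : ℤ) ^ (i : ℕ) with hf
  have hstrict : StrictMono f := fun a b h =>
    pow_lt_pow_right₀ hp1 (by exact_mod_cast h)
  have hmono : Monovary f f := monovary_self f
  have hnot : ¬ Monovary (f ∘ σ) f := by
    intro hM
    apply hσ
    apply perm_strictMono_eq_one σ
    intro a b hab
    have hle : f (σ a) ≤ f (σ b) := hM (hstrict hab)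
    have : (σ a : ℕ) ≤ (σ b : ℕ) := by
      by_contra hcon
      push_neg at hcon
      exact absurd (hstrict (show σ b < σ a by exact_mod_cast hcon)) (not_lt.2 hle)
    have hne : σ a ≠ σ b := fun h => absurd (σ.injective h) (ne_of_lt hab)
    exact lt_of_le_of_ne (by exact_mod_cast this) hne
  have key : ∑ i, f (σ i) * f i < ∑ i, f i * f i :=
    hmono.sum_comp_perm_mul_lt_sum_mul_iff.2 hnot
  have hcast : ((∑ i : Fin N, p ^ ((σ i : ℕ) + (i : ℕ) + 1) : ℕ) : ℤ) <
      ((∑ i : Fin N, p ^ ((i : ℕ) + (i : ℕ) + 1) : ℕ) : ℤ) := by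
    push_cast
    have expand : ∀ (a b : ℕ), (p : ℤ) ^ (a + b + 1) = (p : ℤ) ^ a * (p : ℤ) ^ b * p := by
      intro a b; ring
    calc (∑ i : Fin N, (p : ℤ) ^ ((σ i : ℕ) + (i : ℕ) + 1))
        = (∑ i : Fin N, f (σ i) * f i) * p := by
          rw [Finset.sum_mul]; exact Finset.sum_congr rfl fun i _ => expand _ _
      _ < (∑ i : Fin N, f i * f i) * p := by
          apply mul_lt_mul_of_pos_right key (lt_trans one_pos hp1)
      _ = ∑ i : Fin N, (p : ℤ) ^ ((i : ℕ) + (i : ℕ) + 1) := by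
          rw [Finset.sum_mul]; exact Finset.sum_congr rfl fun i _ => (expand _ _).symm
  exact_mod_cast hcast

/-- The determinant of the Hankel matrix (x^(p^(i+j+1)))_{0≤i,j<N} is a monic
polynomial of degree p + p³ + ... + p^(2N−1); in particular it is nonzero. -/
theorem hankelPow_det_monic (p N : ℕ) (hp : 2 ≤ p) (hN : 1 ≤ N) :
    (hankelPow p N).det.Monic ∧
    (hankelPow p N).det.natDegree = ∑ k ∈ Finset.range N, p ^ (2 * k + 1) ∧
    (hankelPow p N).det ≠ 0 := by
  classical
  set D : ℕ := ∑ k ∈ Finset.range N, p ^ (2 * k + 1) with hD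
  set e : Equiv.Perm (Fin N) → ℕ := fun σ => ∑ i : Fin N, p ^ ((σ i : ℕ) + (i : ℕ) + 1)
    with he
  have he1 : e 1 = D := by
    rw [he, hD]
    simp only [Equiv.Perm.one_apply]
    rw [Fin.sum_univ_eq_sum_range (fun k => p ^ (k + k + 1))]
    exact Finset.sum_congr rfl fun k _ => by ring_nf
  have helt : ∀ σ : Equiv.Perm (Fin N), σ ≠ 1 → e σ < D := by
    intro σ hσ
    rw [← he1]
    exact exp_sum_lt hp σ hσ
  have hele : ∀ σ : Equiv.Perm (Fin N), e σ ≤ D := by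
    intro σ
    by_cases h : σ = 1
    · rw [h, he1]
    · exact le_of_lt (helt σ h)
  have hdet : (hankelPow p N).det =
      ∑ σ : Equiv.Perm (Fin N), Equiv.Perm.sign σ • (Polynomial.X : Polynomial ℤ) ^ e σ := by
    rw [Matrix.det_apply]
    refine Finset.sum_congr rfl fun σ _ => ?_
    congr 1
    rw [he]
    rw [← Finset.prod_pow_eq_pow_sum]
    rfl
  have hcoeff : (hankelPow p N).det.coeff D = 1 := by
    rw [hdet, Polynomial.finset_sum_coeff]
    rw [Finset.sum_eq_single (1 : Equiv.Perm (Fin N))]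
    · simp [he1, Polynomial.coeff_X_pow]
    · intro σ _ hσ
      rw [Polynomial.coeff_smul, Polynomial.coeff_X_pow,
        if_neg (fun h => absurd h.symm (ne_of_lt (helt σ hσ)))]
      simp
    · simp
  have hdeg : (hankelPow p N).det.natDegree ≤ D := by
    rw [hdet]
    apply Polynomial.natDegree_sum_le_of_forall_le
    intro σ _
    calc (Equiv.Perm.sign σ • (Polynomial.X : Polynomial ℤ) ^ e σ).natDegree
        ≤ ((Polynomial.X : Polynomial ℤ) ^ e σ).natDegree := Polynomial.natDegree_smul_le _ _
      _ = e σ := Polynomial.natDegree_X_pow _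
      _ ≤ D := hele σ
  have hne : (hankelPow p N).det ≠ 0 := fun h => by simp [h] at hcoeff
  have hdegeq : (hankelPow p N).det.natDegree = D := by
    refine le_antisymm hdeg ?_
    exact Polynomial.le_natDegree_of_ne_zero (by rw [hcoeff]; exact one_ne_zero)
  refine ⟨?_, hdegeq, hne⟩
  rw [Polynomial.Monic, Polynomial.leadingCoeff, hdegeq, hcoeff]
end

section
/- Let K be a field, p ≥ 1, and let A ∈ K^{M_{p×p}} be a recurrence matrix with finite presentation given by spanning elements A_1 = A, ..., A_d and shift matrices ρ(s,t) ∈ K^{d×d} (so that ρ(s,t)A_k = Σ_j ρ(s,t)_{j,k}A_j). Define the trace sequence τ_n(A) = Σ_{U ∈ {0,...,p-1}^n} A[U,U]. Then the generating series Σ_{n≥0} τ_n(A)·t^n ∈ K[[t]] is a rational function; more precisely, the sequence (τ_n(A))_n satisfies the linear recurrence with characteristic polynomial equal to the characteristic polynomial of the single d×d matrix M = Σ_{s=0}^{p-1} ρ(s,s). -/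
open Matrix

lemma charpoly_transpose {d : ℕ} {K : Type} [Field K] (M : Matrix (Fin d) (Fin d) K) :
    Matrix.charpoly Mᵀ = Matrix.charpoly M := by
  rw [Matrix.charpoly, Matrix.charpoly, ← Matrix.det_transpose (Matrix.charmatrix M)]
  refine congrArg Matrix.det (Matrix.ext fun i j => ?_)
  rw [Matrix.transpose_apply]
  rcases eq_or_ne i j with h | h
  · subst h; simp [Matrix.charmatrix_apply_eq]
  · rw [Matrix.charmatrix_apply_ne _ _ _ h, Matrix.charmatrix_apply_ne _ _ _ (Ne.symm h),
      Matrix.transpose_apply]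

/-- Given a finite presentation of a recurrence matrix A with shift matrices ρ(s,t),
the trace sequence τ_n(A) = Σ_U A[U,U] satisfies the linear recurrence whose
characteristic polynomial is the characteristic polynomial of M = Σ_s ρ(s,s);
hence its generating series is rational. -/
theorem trace_sequence_linear_recurrence (K : Type) [Field K] (p d : ℕ) (hp : 1 ≤ p)
    (A : RM K p p) (fam : Fin d → RM K p p) (i0 : Fin d) (hA : fam i0 = A)
    (ρM : Fin p → Fin p → Matrix (Fin d) (Fin d) K)
    (hpres : ∀ (s t : Fin p) (k : Fin d),
      shiftRM (fun _ : Fin 1 => s) (fun _ : Fin 1 => t) (fam k)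
        = ∑ j : Fin d, ρM s t j k • fam j) :
    ∀ n : ℕ, ∑ i ∈ Finset.range (d + 1),
      (Matrix.charpoly (∑ s : Fin p, ρM s s)).coeff i *
        (∑ U : Fin (n + i) → Fin p, A (n + i) U U) = 0 := by
  set M : Matrix (Fin d) (Fin d) K := ∑ s : Fin p, ρM s s with hM
  set v : ℕ → Fin d → K := fun n k => ∑ U : Fin n → Fin p, fam k n U U with hv
  -- the one-step recursion
  have hstep : ∀ n k, v (n + 1) k = ∑ j, M j k * v n j := by
    intro n k
    calc v (n + 1) k = ∑ x : Fin p × (Fin n → Fin p),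
          fam k (n + 1) (Fin.snoc x.2 x.1) (Fin.snoc x.2 x.1) := by
          show (∑ U : Fin (n + 1) → Fin p, fam k (n + 1) U U) = _
          refine Fintype.sum_equiv (Fin.snocEquiv (fun _ => Fin p)).symm _ _ fun U => ?_
          simp [Fin.snocEquiv, Fin.snoc_init_self]
      _ = ∑ s : Fin p, ∑ U : Fin n → Fin p,
          fam k (n + 1) (Fin.snoc U s) (Fin.snoc U s) := by
          rw [Fintype.sum_prod_type]
      _ = ∑ s : Fin p, ∑ U : Fin n → Fin p, ∑ j, ρM s s j k * fam j n U U := by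
          refine Finset.sum_congr rfl fun s _ => Finset.sum_congr rfl fun U _ => ?_
          have h1 : shiftRM (fun _ : Fin 1 => s) (fun _ : Fin 1 => s) (fam k) n U U
              = ∑ j : Fin d, ρM s s j k • fam j n U U := by
            rw [hpres s s k]
            simp [Finset.sum_apply]
          have h2 : shiftRM (fun _ : Fin 1 => s) (fun _ : Fin 1 => s) (fam k) n U U
              = fam k (n + 1) (Fin.snoc U s) (Fin.snoc U s) := by
            rw [shiftRM, Fin.append_right_eq_snoc]
          rw [← h2, h1]
          simp [smul_eq_mul]
      _ = ∑ s : Fin p, ∑ j, ρM s s j k * v n j := by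
          refine Finset.sum_congr rfl fun s _ => ?_
          rw [Finset.sum_comm]
          exact Finset.sum_congr rfl fun j _ => (Finset.mul_sum _ _ _).symm
      _ = ∑ j, (∑ s, ρM s s j k) * v n j := by
          rw [Finset.sum_comm]
          exact Finset.sum_congr rfl fun j _ => (Finset.sum_mul _ _ _).symm
      _ = ∑ j, M j k * v n j := by
          refine Finset.sum_congr rfl fun j _ => ?_
          rw [hM]
          simp [Matrix.sum_apply]
  -- v n = (Mᵀ)^n applied to v 0
  have hvn : ∀ n, v n = (Mᵀ ^ n).mulVec (v 0) := by
    intro n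
    induction n with
    | zero => simp
    | succ n ih =>
      funext k
      rw [pow_succ', ← Matrix.mulVec_mulVec, ← ih]
      rw [hstep n k]
      simp [Matrix.mulVec, dotProduct, Matrix.transpose_apply]
  -- Cayley–Hamilton for Mᵀ
  have hdeg : (Matrix.charpoly M).natDegree = d := by
    rw [Matrix.charpoly_natDegree_eq_dim, Fintype.card_fin]
  have hCH : ∑ i ∈ Finset.range (d + 1),
      (Matrix.charpoly M).coeff i • (Mᵀ) ^ i = 0 := by
    have h := Matrix.aeval_self_charpoly Mᵀ
    rw [_root_.charpoly_transpose] at h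
    rw [Polynomial.aeval_eq_sum_range, hdeg] at h
    exact h
  intro n
  have hτ : ∀ m : ℕ, (∑ U : Fin m → Fin p, A m U U) = ((Mᵀ ^ m).mulVec (v 0)) i0 := by
    intro m
    rw [← hvn m, hv, ← hA]
  calc ∑ i ∈ Finset.range (d + 1), (Matrix.charpoly M).coeff i *
        (∑ U : Fin (n + i) → Fin p, A (n + i) U U)
      = ∑ i ∈ Finset.range (d + 1), (Matrix.charpoly M).coeff i *
        ((Mᵀ ^ n * Mᵀ ^ i).mulVec (v 0)) i0 := by
        refine Finset.sum_congr rfl fun i _ => ?_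
        rw [hτ (n + i), pow_add]
    _ = ((Mᵀ ^ n * ∑ i ∈ Finset.range (d + 1),
          (Matrix.charpoly M).coeff i • Mᵀ ^ i).mulVec (v 0)) i0 := by
        rw [Finset.mul_sum]
        rw [show (∑ i ∈ Finset.range (d + 1), Mᵀ ^ n * (Matrix.charpoly M).coeff i • Mᵀ ^ i)
            = ∑ i ∈ Finset.range (d + 1), (Matrix.charpoly M).coeff i • (Mᵀ ^ n * Mᵀ ^ i) from
          Finset.sum_congr rfl fun i _ => (mul_smul_comm _ _ _)]
        simp only [Matrix.mulVec, dotProduct, Matrix.sum_apply, Matrix.smul_apply,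
          Finset.sum_apply, Finset.mul_sum, Finset.sum_mul, smul_eq_mul, mul_assoc]
        rw [Finset.sum_comm]
    _ = 0 := by rw [hCH, mul_zero]; simp
end

section
/- Let K be a field and p ≥ 2. Define the palindromic element P ∈ K^{M_{p×p}} by P[s_1...s_n, t_1...t_n] = 1 if t_1...t_n = s_n...s_1 (the reversed word) and 0 otherwise. Then for every n, the shifts {ρ(S,T)P : (S,T) a pair of words of length n} contain p^n pairwise linearly independent elements of K^{M_{p×p}}; consequently the recursive closure of P is infinite-dimensional, i.e. P is not a recurrence matrix. -/
/-- The palindromic element: P[U,W] = 1 if W is the reverse of U, and 0 otherwise. -/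
def palin (K : Type) [Field K] (p : ℕ) : RM K p p :=
  fun n U W => if (∀ i : Fin n, W i = U (Fin.rev i)) then 1 else 0

lemma revnat {n : ℕ} (i : Fin n) : Fin.rev (Fin.natAdd n i) = Fin.castAdd n (Fin.rev i) := by
  ext; simp [Fin.rev, Fin.natAdd, Fin.castAdd, Fin.castLE]; omega

lemma revcast {n : ℕ} (i : Fin n) : Fin.rev (Fin.castAdd n i) = Fin.natAdd n (Fin.rev i) := by
  ext; simp [Fin.rev, Fin.natAdd, Fin.castAdd, Fin.castLE]; omega

lemma key_s18 (K : Type) [Field K] (p n : ℕ) (S S₀ : Fin n → Fin p) :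
    shiftRM S (fun i => S (Fin.rev i)) (palin K p) n S₀ (fun i => S₀ (Fin.rev i))
      = if S₀ = S then (1 : K) else 0 := by
  unfold shiftRM palin
  congr 1
  simp only [eq_iff_iff]
  constructor
  · intro h
    funext j
    have := h (Fin.natAdd n (Fin.rev j))
    rw [Fin.append_right, revnat, Fin.append_left] at this
    simpa using this.symm
  · rintro rfl i
    refine Fin.addCases (fun j => ?_) (fun j => ?_) i
    · rw [Fin.append_left, revcast, Fin.append_right]
    · rw [Fin.append_right, revnat, Fin.append_left]

lemma famLI (K : Type) [Field K] (p n : ℕ) :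
    LinearIndependent K (fun S : Fin n → Fin p =>
      shiftRM S (fun i => S (Fin.rev i)) (palin K p)) := by
  rw [Fintype.linearIndependent_iff]
  intro g hg S
  have h := congrFun (congrFun (congrFun hg n) S) (fun i => S (Fin.rev i))
  simp only [Finset.sum_apply, Pi.smul_apply, smul_eq_mul, key_s18, Pi.zero_apply] at h
  simpa using h

/-- For every n, among the shifts ρ(S,T)P with (S,T) of length n there is a linearly
independent family indexed by the p^n words S of length n; consequently the recursive
closure of P is infinite-dimensional, i.e. P is not a recurrence matrix. -/
theorem palin_not_recurrence (K : Type) [Field K] (p : ℕ) (hp : 2 ≤ p) :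
    (∀ n : ℕ, ∃ fam : (Fin n → Fin p) → RM K p p,
      (∀ S : Fin n → Fin p, ∃ T : Fin n → Fin p, fam S = shiftRM S T (palin K p)) ∧
      LinearIndependent K fam)
    ∧ ¬ FiniteDimensional K ↥(recClosure (palin K p)) := by
  constructor
  · intro n
    exact ⟨fun S => shiftRM S (fun i => S (Fin.rev i)) (palin K p),
      fun S => ⟨fun i => S (Fin.rev i), rfl⟩, famLI K p n⟩
  · intro hfd
    set d := Module.finrank K ↥(recClosure (palin K p)) with hd
    set n := d + 1 with hn
    have hmem : ∀ S : Fin n → Fin p,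
        shiftRM S (fun i => S (Fin.rev i)) (palin K p) ∈ recClosure (palin K p) := by
      intro S
      exact Submodule.subset_span ⟨n, S, fun i => S (Fin.rev i), rfl⟩
    set fam' : (Fin n → Fin p) → ↥(recClosure (palin K p)) :=
      fun S => ⟨shiftRM S (fun i => S (Fin.rev i)) (palin K p), hmem S⟩ with hfam'
    have hli : LinearIndependent K fam' := by
      apply LinearIndependent.of_comp (recClosure (palin K p)).subtype
      exact famLI K p n
    have hcard := hli.fintype_card_le_finrank
    rw [Fintype.card_fun, Fintype.card_fin, Fintype.card_fin] at hcard
    have h2 : n < 2 ^ n := Nat.lt_two_pow_self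
    have h3 : 2 ^ n ≤ p ^ n := Nat.pow_le_pow_left hp n
    omega
end
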